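/- arXiv:2011.00295 — 4 statements merged into one kernel-verified Lean document; each statement's English description precedes it below -/
import Mathlib

section
/- Let F₂ × F₂ be the direct product of two free groups, the first with free generators u₁, v₁ and the second with free generators u₂, v₂. Let f : F₂ × F₂ → ℤ × ℤ be the homomorphism sending u₁ and u₂ to (1,0) and v₁ and v₂ to (0,1). Then the kernel of f equals the subgroup generated by the three elements z₁ = u₁u₂⁻¹, z₂ = v₁v₂⁻¹, and z₃ = [u₁, v₁]. -/
/-- The direct product of two free groups on two generators. -/
abbrev G2 : Type := FreeGroup (Fin 2) × FreeGroup (Fin 2)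

/-- Generator `u₁` of the first factor. -/
def u₁ : G2 := (FreeGroup.of 0, 1)
/-- Generator `v₁` of the first factor. -/
def v₁ : G2 := (FreeGroup.of 1, 1)
/-- Generator `u₂` of the second factor. -/
def u₂ : G2 := (1, FreeGroup.of 0)
/-- Generator `v₂` of the second factor. -/
def v₂ : G2 := (1, FreeGroup.of 1)

/-- The homomorphism `F₂ × F₂ → ℤ × ℤ` sending `u₁, u₂ ↦ (1,0)` and `v₁, v₂ ↦ (0,1)`. -/
def fhom : G2 →* Multiplicative (ℤ × ℤ) :=
  MonoidHom.coprod
    (FreeGroup.lift fun i : Fin 2 =>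
      if i = 0 then Multiplicative.ofAdd ((1, 0) : ℤ × ℤ)
      else Multiplicative.ofAdd ((0, 1) : ℤ × ℤ))
    (FreeGroup.lift fun i : Fin 2 =>
      if i = 0 then Multiplicative.ofAdd ((1, 0) : ℤ × ℤ)
      else Multiplicative.ofAdd ((0, 1) : ℤ × ℤ))

/-!
Let `H` be the subgroup generated by `z₁, z₂, z₃`. Since `z₁ = (u, u⁻¹)` and `z₂ = (v, v⁻¹)`, `H`
contains the graph `{(w, ρ w)}` of the endomorphism `ρ` of `F₂` inverting both generators.
Conjugating by these elements shows that `N = {w | (w, 1) ∈ H}` is normal in `F₂`; it contains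
`[u, v]`, so `F₂ ⧸ N` is generated by two commuting elements and the exponent-sum map
`F₂ → ℤ²` splits through it, giving `ker ≤ N`. Finally every `(x, y)` in the kernel factors as
`(x · (ρ y)⁻¹, 1) · (ρ y, y)`, where the first factor lies in `N × 1` and the second on the graph.
-/

namespace FreeGroup

variable {α : Type*}

def invertGenerators : FreeGroup α →* FreeGroup α :=
  lift fun i => (of i)⁻¹

@[simp]
theorem invertGenerators_of (i : α) : invertGenerators (of i) = (of i)⁻¹ :=
  lift_apply_of

@[simp]
theorem invertGenerators_invertGenerators (w : FreeGroup α) :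
    invertGenerators (invertGenerators w) = w := by
  have : invertGenerators.comp invertGenerators = MonoidHom.id (FreeGroup α) := by
    ext i; simp
  exact DFunLike.congr_fun this w

theorem map_invertGenerators {A : Type*} [CommGroup A] (f : FreeGroup α →* A)
    (w : FreeGroup α) : f (invertGenerators w) = (f w)⁻¹ := by
  have : f.comp invertGenerators = f⁻¹ := by ext i; simp
  exact DFunLike.congr_fun this w

theorem range_prod_invertGenerators :
    ((MonoidHom.id (FreeGroup α)).prod invertGenerators).range =
      Subgroup.closure (Set.range fun i => (of i, (of i)⁻¹)) := by
  rw [← range_lift_eq_closure]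
  congr 1
  ext i <;> simp

end FreeGroup

theorem Subgroup.normal_comap_inl {G G' : Type*} [Group G] [Group G'] (K : Subgroup (G × G'))
    (hK : ∀ g, ∃ g', (g, g') ∈ K) : (K.comap (MonoidHom.inl G G')).Normal where
  conj_mem n hn g := by
    obtain ⟨g', hg'⟩ := hK g
    convert K.mul_mem (K.mul_mem hg' (Subgroup.mem_comap.1 hn)) (K.inv_mem hg') using 1
    simp

def commutingPairHom {Q : Type*} [Group Q] {a b : Q} (hab : Commute a b) :
    Multiplicative (ℤ × ℤ) →* Q :=
  ((zpowersHom Q a).noncommCoprod (zpowersHom Q b) fun _ _ => hab.zpow_zpow _ _).comp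
    (MulEquiv.prodMultiplicative (G := ℤ) (H := ℤ)).toMonoidHom

section ExponentSum

open FreeGroup

def exponentSum : FreeGroup (Fin 2) →* Multiplicative (ℤ × ℤ) :=
  lift fun i => if i = 0 then .ofAdd (1, 0) else .ofAdd (0, 1)

theorem fhom_eq_coprod : fhom = exponentSum.coprod exponentSum := rfl

theorem ker_exponentSum_le {N : Subgroup (FreeGroup (Fin 2))} [N.Normal]
    (hN : (of 0)⁻¹ * (of 1)⁻¹ * of 0 * of 1 ∈ N) : exponentSum.ker ≤ N := by
  have hcomm : Commute (QuotientGroup.mk' N (of 0)) (QuotientGroup.mk' N (of 1)) := by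
    rw [← Commute.inv_inv_iff, ← commutatorElement_eq_one_iff_commute, ← _root_.map_inv,
      ← _root_.map_inv, ← map_commutatorElement, QuotientGroup.mk'_apply, QuotientGroup.eq_one_iff]
    simpa [commutatorElement_def] using hN
  have hsplit : (commutingPairHom hcomm).comp exponentSum = QuotientGroup.mk' N := by
    ext i; fin_cases i <;> simp [exponentSum, commutingPairHom]
  calc exponentSum.ker ≤ ((commutingPairHom hcomm).comp exponentSum).ker := by
        rw [← MonoidHom.comap_ker]; exact MonoidHom.ker_le_comap _ _
    _ = N := by rw [hsplit, QuotientGroup.ker_mk']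

end ExponentSum

open FreeGroup in
theorem stmt0 :
    fhom.ker =
      Subgroup.closure {u₁ * u₂⁻¹, v₁ * v₂⁻¹, u₁⁻¹ * v₁⁻¹ * u₁ * v₁} := by
  set H := Subgroup.closure {u₁ * u₂⁻¹, v₁ * v₂⁻¹, u₁⁻¹ * v₁⁻¹ * u₁ * v₁}
  have hgraph (w : FreeGroup (Fin 2)) : (w, invertGenerators w) ∈ H := by
    suffices ((MonoidHom.id _).prod invertGenerators).range ≤ H from this ⟨w, rfl⟩
    rw [range_prod_invertGenerators, Subgroup.closure_le]
    rintro _ ⟨i, rfl⟩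
    fin_cases i <;> apply Subgroup.subset_closure <;> simp [u₁, u₂, v₁, v₂]
  have hN : exponentSum.ker ≤ H.comap (MonoidHom.inl _ _) := by
    have : (H.comap (MonoidHom.inl _ _)).Normal := H.normal_comap_inl fun g => ⟨_, hgraph g⟩
    refine ker_exponentSum_le (Subgroup.subset_closure ?_)
    simp [u₁, v₁]
  refine le_antisymm (fun x hx => ?_) ((Subgroup.closure_le _).2 ?_)
  · have hx1 : x.1 * (invertGenerators x.2)⁻¹ ∈ exponentSum.ker := by
      simpa [fhom_eq_coprod, map_invertGenerators] using hx
    have hdecomp : x = (x.1 * (invertGenerators x.2)⁻¹, 1) * (invertGenerators x.2, x.2) := by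
      simp
    rw [hdecomp]
    simpa using H.mul_mem (hN hx1) (hgraph (invertGenerators x.2))
  · rintro _ (rfl | rfl | rfl) <;>
      simp [fhom, u₁, u₂, v₁, v₂, ← ofAdd_add, ← ofAdd_neg]
end

section
/- Let F₂ × F₂ be the direct product of two free groups with free generators u₁, v₁ (first factor) and u₂, v₂ (second factor), and let f : F₂ × F₂ → ℤ × ℤ be the homomorphism sending u₁, u₂ to (1,0) and v₁, v₂ to (0,1). Then the kernel of f equals the normal closure in F₂ × F₂ of the two elements z₁ = u₁u₂⁻¹ and z₂ = v₁v₂⁻¹. -/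
/-!
Let `N` be the normal closure of `u₁u₂⁻¹` and `v₁v₂⁻¹`; clearly `N ≤ ker f`. For the converse it
suffices to find a homomorphism `s : ℤ × ℤ → (F₂ × F₂)/N` with `s ∘ f` the quotient map. Take
`s (a, b) = (x^a, y^b) mod N`, where `x, y` are the free generators: it is a homomorphism because the
two coordinates live in commuting factors, and modulo `N` it sends `f u₁ = f u₂` to `u₁ ≡ u₂` and
`f v₁ = f v₂` to `v₂ ≡ v₁`.
-/

open QuotientGroup

theorem MonoidHom.prod_ext {M N P : Type*} [MulOneClass M] [MulOneClass N] [MulOneClass P]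
    {f g : M × N →* P} (hl : f.comp (inl M N) = g.comp (inl M N))
    (hr : f.comp (inr M N) = g.comp (inr M N)) : f = g := by
  ext ⟨m, n⟩
  rw [← mul_one m, ← one_mul n, ← Prod.mk_mul_mk, map_mul, map_mul]
  exact congr_arg₂ (· * ·) (DFunLike.congr_fun hl m) (DFunLike.congr_fun hr n)

theorem MonoidHom.ker_eq_of_comp_eq_mk' {G H : Type*} [Group G] [Group H] {f : G →* H}
    {N : Subgroup G} [N.Normal] (hN : N ≤ f.ker) (s : H →* G ⧸ N)
    (hs : s.comp f = QuotientGroup.mk' N) : f.ker = N := by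
  refine le_antisymm (fun x hx => ?_) hN
  rw [← ker_mk' N, ← hs, mem_ker, comp_apply, hx, map_one]

abbrev diagNormalClosure : Subgroup G2 := Subgroup.normalClosure {u₁ * u₂⁻¹, v₁ * v₂⁻¹}

def fhomSection : Multiplicative (ℤ × ℤ) →* G2 :=
  (MonoidHom.prodMap (zpowersHom _ (FreeGroup.of 0)) (zpowersHom _ (FreeGroup.of 1))).comp
    (MulEquiv.prodMultiplicative (G := ℤ) (H := ℤ)).toMonoidHom

theorem fhomSection_fhom_u₁ : fhomSection (fhom u₁) = u₁ := by simp [fhomSection, fhom, u₁]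

theorem fhomSection_fhom_v₁ : fhomSection (fhom v₁) = v₂ := by simp [fhomSection, fhom, v₁, v₂]

theorem fhomSection_fhom_u₂ : fhomSection (fhom u₂) = u₁ := by simp [fhomSection, fhom, u₁, u₂]

theorem fhomSection_fhom_v₂ : fhomSection (fhom v₂) = v₂ := by simp [fhomSection, fhom, v₂]

theorem diagNormalClosure_le_ker_fhom : diagNormalClosure ≤ fhom.ker := by
  refine Subgroup.normalClosure_le_normal ?_
  rintro x (rfl | rfl) <;> simp [fhom, u₁, u₂, v₁, v₂]

theorem mk'_comp_fhomSection_comp_fhom :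
    ((mk' diagNormalClosure).comp fhomSection).comp fhom = mk' diagNormalClosure := by
  have hu : mk' diagNormalClosure u₁ = mk' diagNormalClosure u₂ := by
    refine eq_iff_div_mem.mpr ?_
    rw [div_eq_mul_inv]
    exact Subgroup.subset_normalClosure (by simp)
  have hv : mk' diagNormalClosure v₁ = mk' diagNormalClosure v₂ := by
    refine eq_iff_div_mem.mpr ?_
    rw [div_eq_mul_inv]
    exact Subgroup.subset_normalClosure (by simp)
  refine MonoidHom.prod_ext (FreeGroup.ext_hom _ _ fun i => ?_)
    (FreeGroup.ext_hom _ _ fun i => ?_)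
  all_goals fin_cases i
  · show mk' diagNormalClosure (fhomSection (fhom u₁)) = mk' diagNormalClosure u₁
    rw [fhomSection_fhom_u₁]
  · show mk' diagNormalClosure (fhomSection (fhom v₁)) = mk' diagNormalClosure v₁
    rw [fhomSection_fhom_v₁, hv]
  · show mk' diagNormalClosure (fhomSection (fhom u₂)) = mk' diagNormalClosure u₂
    rw [fhomSection_fhom_u₂, hu]
  · show mk' diagNormalClosure (fhomSection (fhom v₂)) = mk' diagNormalClosure v₂
    rw [fhomSection_fhom_v₂]

theorem stmt1 :
    fhom.ker = Subgroup.normalClosure {u₁ * u₂⁻¹, v₁ * v₂⁻¹} :=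
  MonoidHom.ker_eq_of_comp_eq_mk' diagNormalClosure_le_ker_fhom _ mk'_comp_fhomSection_comp_fhom
end

section
/- Let 𝔹 be the free Boolean algebra (over ℤ/2, with relations q² = q for every element) on six variables a₁, b₁, a₂, b₂, a₃, b₃. There exist no elements q, r ∈ 𝔹 with r a Boolean polynomial of degree at most 3 such that a₁b₁a₂b₂ + a₁b₁a₃b₃ + a₂b₂a₃b₃ = q·(a₁b₁ + a₂b₂ + a₃b₃) + r. -/
/-!
Let `g = a₁b₁ + a₂b₂ + a₃b₃` and `F = a₁b₁a₂b₂ + a₁b₁a₃b₃ + a₂b₂a₃b₃`, and consider the linear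
functional `φ f = ∑_{g p = 0} f p = ∑_p (1 + g p) f p`. It kills every multiple of `g`, since
`(1 + g) g = 0`. Summing a Boolean polynomial over all of `(ℤ/2)⁶` picks out its coefficient of
`a₁b₁a₂b₂a₃b₃`, so `φ f` is the top coefficient of `(1 + g) f`. As `1 + g` has degree `2`, `φ`
kills every `r` of degree at most `3`, whereas `(1 + g) F = F + a₁b₁a₂b₂a₃b₃` gives `φ F = 1`.
-/

open Finset

lemma prod_mul_prod_eq_prod_union {ι : Type*} [DecidableEq ι] (p : ι → ZMod 2)
    (S T : Finset ι) : (∏ i ∈ S, p i) * ∏ i ∈ T, p i = ∏ i ∈ S ∪ T, p i := by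
  induction S using Finset.induction_on with
  | empty => simp
  | insert j S hj ih =>
    rw [prod_insert hj, mul_assoc, ih, insert_union]
    by_cases hjT : j ∈ S ∪ T
    · rw [insert_eq_of_mem hjT, ← mul_prod_erase _ _ hjT, ← mul_assoc, ← pow_two,
        ZMod.pow_card]
    · rw [prod_insert hjT]

section

variable {ι : Type*} [Fintype ι] [DecidableEq ι]

lemma sum_prod_eq_zero_of_card_lt {S : Finset ι} (hS : #S < Fintype.card ι) :
    ∑ p : ι → ZMod 2, ∏ i ∈ S, p i = 0 := by
  obtain ⟨j, -, hj⟩ := exists_mem_notMem_of_card_lt_card (t := univ) hS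
  calc ∑ p : ι → ZMod 2, ∏ i ∈ S, p i
      = ∑ p : ι → ZMod 2, ∏ i, if i ∈ S then p i else 1 := by
        simp only [Fintype.prod_ite_mem]
    _ = ∏ i, ∑ x : ZMod 2, if i ∈ S then x else 1 :=
        (Fintype.prod_sum fun i (x : ZMod 2) => if i ∈ S then x else 1).symm
    _ = 0 := prod_eq_zero (mem_univ j) (by simp [hj]; rfl)

lemma sum_prod_univ : ∑ p : ι → ZMod 2, ∏ i, p i = 1 := by
  rw [← Fintype.prod_sum fun _ (x : ZMod 2) => x]
  exact prod_eq_one fun _ _ => rfl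

noncomputable def sumOnZeros (g : (ι → ZMod 2) → ZMod 2) :
    ((ι → ZMod 2) → ZMod 2) →ₗ[ZMod 2] ZMod 2 :=
  ∑ p, (1 + g p) • LinearMap.proj p

lemma sumOnZeros_apply (g f : (ι → ZMod 2) → ZMod 2) :
    sumOnZeros g f = ∑ p, (1 + g p) * f p := by
  simp [sumOnZeros]

lemma sumOnZeros_mul_self (g q : (ι → ZMod 2) → ZMod 2) : sumOnZeros g (q * g) = 0 := by
  rw [sumOnZeros_apply]
  refine sum_eq_zero fun p _ => ?_
  have h : ∀ x : ZMod 2, (1 + x) * x = 0 := by decide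
  rw [Pi.mul_apply, mul_left_comm, h, mul_zero]

end

local notation "hyperbolicForm" => fun p : Fin 6 → ZMod 2 => p 0 * p 1 + p 2 * p 3 + p 4 * p 5

lemma sumOnZeros_monomial_eq_zero {S : Finset (Fin 6)} (hS : #S ≤ 3) :
    sumOnZeros hyperbolicForm (fun p => ∏ i ∈ S, p i) = 0 := by
  have hT : ∀ T : Finset (Fin 6), #T ≤ 2 →
      ∑ p : Fin 6 → ZMod 2, (∏ i ∈ T, p i) * ∏ i ∈ S, p i = 0 := fun T hT2 => by
    simp_rw [prod_mul_prod_eq_prod_union]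
    exact sum_prod_eq_zero_of_card_lt ((card_union_le T S).trans_lt (by simp; omega))
  calc sumOnZeros hyperbolicForm (fun p => ∏ i ∈ S, p i)
      = ∑ p : Fin 6 → ZMod 2, (∏ i ∈ ∅, p i) * ∏ i ∈ S, p i
        + ∑ p : Fin 6 → ZMod 2, (∏ i ∈ {0, 1}, p i) * ∏ i ∈ S, p i
        + ∑ p : Fin 6 → ZMod 2, (∏ i ∈ {2, 3}, p i) * ∏ i ∈ S, p i
        + ∑ p : Fin 6 → ZMod 2, (∏ i ∈ {4, 5}, p i) * ∏ i ∈ S, p i := by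
        simp [sumOnZeros_apply, sum_add_distrib, add_mul, add_assoc]
    _ = 0 := by rw [hT, hT, hT, hT] <;> simp

lemma sumOnZeros_quartic_eq_one :
    sumOnZeros hyperbolicForm
      (fun p => p 0 * p 1 * p 2 * p 3 + p 0 * p 1 * p 4 * p 5 + p 2 * p 3 * p 4 * p 5) = 1 := by
  have hxyz : ∀ x y z : ZMod 2,
      (1 + (x + y + z)) * (x * y + x * z + y * z) = x * y + x * z + y * z + x * y * z := by
    decide
  calc sumOnZeros hyperbolicForm
        (fun p => p 0 * p 1 * p 2 * p 3 + p 0 * p 1 * p 4 * p 5 + p 2 * p 3 * p 4 * p 5)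
      = ∑ p : Fin 6 → ZMod 2, ∏ i ∈ {0, 1, 2, 3}, p i
        + ∑ p : Fin 6 → ZMod 2, ∏ i ∈ {0, 1, 4, 5}, p i
        + ∑ p : Fin 6 → ZMod 2, ∏ i ∈ {2, 3, 4, 5}, p i
        + ∑ p : Fin 6 → ZMod 2, ∏ i, p i := by
        simp only [sumOnZeros_apply, ← sum_add_distrib]
        refine sum_congr rfl fun p _ => ?_
        simp only [Fin.prod_univ_six, prod_insert, prod_singleton, mem_insert, mem_singleton,
          Fin.isValue, Fin.reduceEq, zero_ne_one, or_self, not_false_eq_true]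
        linear_combination hxyz (p 0 * p 1) (p 2 * p 3) (p 4 * p 5)
    _ = 1 := by
        rw [sum_prod_eq_zero_of_card_lt, sum_prod_eq_zero_of_card_lt,
          sum_prod_eq_zero_of_card_lt, sum_prod_univ] <;> simp

/-- In the free Boolean algebra on six variables `a₁ b₁ a₂ b₂ a₃ b₃` (modeled as the
`ℤ/2`-algebra of functions `(ℤ/2)⁶ → ℤ/2`, with the variables the coordinate functions
`p 0, p 1, p 2, p 3, p 4, p 5`), there are no `q`, `r` with `r` of degree at most `3`
(a `ℤ/2`-linear combination of products of at most 3 distinct variables) such that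
`a₁b₁a₂b₂ + a₁b₁a₃b₃ + a₂b₂a₃b₃ = q (a₁b₁ + a₂b₂ + a₃b₃) + r`. -/
theorem stmt6 :
    ¬ ∃ (q r : (Fin 6 → ZMod 2) → ZMod 2),
      r ∈ Submodule.span (ZMod 2)
          {f : (Fin 6 → ZMod 2) → ZMod 2 |
            ∃ S : Finset (Fin 6), S.card ≤ 3 ∧ f = fun p => ∏ i ∈ S, p i} ∧
      (fun p : Fin 6 → ZMod 2 =>
          p 0 * p 1 * p 2 * p 3 + p 0 * p 1 * p 4 * p 5 + p 2 * p 3 * p 4 * p 5) =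
        q * (fun p => p 0 * p 1 + p 2 * p 3 + p 4 * p 5) + r := by
  rintro ⟨q, r, hr, hF⟩
  have hr0 : sumOnZeros hyperbolicForm r = 0 := by
    refine LinearMap.mem_ker.mp (Submodule.span_le.mpr ?_ hr)
    rintro f ⟨S, hS, rfl⟩
    exact sumOnZeros_monomial_eq_zero hS
  have h := congrArg (sumOnZeros hyperbolicForm) hF
  rw [sumOnZeros_quartic_eq_one, map_add, sumOnZeros_mul_self, hr0, add_zero] at h
  exact one_ne_zero h
end

section
/- Let V = (ℤ/2)^{2g} with a nondegenerate symplectic form ⟨·,·⟩, and let ω : V → ℤ/2 be an Sp-quadratic function, i.e. ω(x+y) = ω(x) + ω(y) + ⟨x,y⟩ for all x,y. Then the quantity Arf(ω) = Σ_{i=1}^{g} ω(aᵢ)ω(bᵢ) is independent of the choice of symplectic basis a₁,…,a_g, b₁,…,b_g of V. -/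
/-- `(ℤ/2)^{2g}` with its standard symplectic structure. -/
abbrev V (g : ℕ) : Type := (Fin g → ZMod 2) × (Fin g → ZMod 2)

/-- The (nondegenerate) standard symplectic form on `V g`. -/
def B {g : ℕ} (x y : V g) : ZMod 2 := ∑ i, (x.1 i * y.2 i + x.2 i * y.1 i)

/-- `ω` is Sp-quadratic if `ω(x+y) = ω(x) + ω(y) + ⟨x,y⟩`. -/
def IsSpQuadratic {g : ℕ} (ω : V g → ZMod 2) : Prop :=
  ∀ x y : V g, ω (x + y) = ω x + ω y + B x y

/-- `a`, `b` form a symplectic basis of `V g`. -/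
def IsSymplecticBasis {g : ℕ} (a b : Fin g → V g) : Prop :=
  (∀ i j, B (a i) (a j) = 0) ∧ (∀ i j, B (b i) (b j) = 0) ∧
  (∀ i j, B (a i) (b j) = if i = j then 1 else 0) ∧
  LinearIndependent (ZMod 2) (Sum.elim a b) ∧
  Submodule.span (ZMod 2) (Set.range (Sum.elim a b)) = ⊤

/-!
The Gauss sum `∑ᵥ (-1)^ω(v)` is defined without reference to any basis. In the coordinates of a
symplectic basis the planes `⟨aᵢ, bᵢ⟩` are mutually orthogonal, so `ω` is the sum of its
restrictions to them and the Gauss sum factors as a product of `g` sums over `(ℤ/2)²`, each equal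
to `2 · (-1)^(ω(aᵢ) ω(bᵢ))`. Hence the Gauss sum is `2^g (-1)^Arf(ω)` for every symplectic basis.
-/

theorem AddChar.map_sum_eq_prod {ι A M : Type*} [AddCommMonoid A] [CommMonoid M]
    (ψ : AddChar A M) (s : Finset ι) (f : ι → A) :
    ψ (∑ i ∈ s, f i) = ∏ i ∈ s, ψ (f i) := by
  induction s using Finset.cons_induction with
  | empty => simp
  | cons j s hj ih => simp [AddChar.map_add_eq_mul, ih]

def parityChar : AddChar (ZMod 2) ℤ where
  toFun t := (-1) ^ t.val
  map_zero_eq_one' := rfl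
  map_add_eq_mul' := by decide

theorem parityChar_injective : Function.Injective parityChar := by decide

/-- With `α = ω(aᵢ)` and `β = ω(bᵢ)`, the Gauss sum of `ω` on the plane `⟨aᵢ, bᵢ⟩`. -/
theorem sum_parityChar_mul_add (α β : ZMod 2) :
    ∑ q : ZMod 2 × ZMod 2, parityChar (q.1 * α + q.2 * β + q.1 * q.2) =
      2 * parityChar (α * β) := by
  revert α β; decide

namespace B

variable {g : ℕ}

theorem comm (x y : V g) : B x y = B y x :=
  Finset.sum_congr rfl fun _ _ => by ring

theorem add_left (x y z : V g) : B (x + y) z = B x z + B y z := by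
  simp only [B, Prod.fst_add, Prod.snd_add, Pi.add_apply, ← Finset.sum_add_distrib]
  exact Finset.sum_congr rfl fun _ _ => by ring

theorem add_right (x y z : V g) : B x (y + z) = B x y + B x z := by
  rw [comm, add_left, comm y, comm z]

theorem smul_left (c : ZMod 2) (x y : V g) : B (c • x) y = c * B x y := by
  simp only [B, Prod.smul_fst, Prod.smul_snd, Pi.smul_apply, smul_eq_mul, Finset.mul_sum]
  exact Finset.sum_congr rfl fun _ _ => by ring

theorem smul_right (c : ZMod 2) (x y : V g) : B x (c • y) = c * B x y := by
  rw [comm, smul_left, comm]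

theorem zero_left (x : V g) : B 0 x = 0 := by simpa using smul_left 0 0 x

theorem sum_right {ι : Type*} (x : V g) (s : Finset ι) (u : ι → V g) :
    B x (∑ i ∈ s, u i) = ∑ i ∈ s, B x (u i) := by
  induction s using Finset.cons_induction with
  | empty => rw [Finset.sum_empty, Finset.sum_empty, comm, zero_left]
  | cons j s hj ih => rw [Finset.sum_cons, Finset.sum_cons, add_right, ih]

end B

namespace IsSpQuadratic

variable {g : ℕ} {ω : V g → ZMod 2}

theorem map_zero (hω : IsSpQuadratic ω) : ω 0 = 0 := by
  simpa [B.zero_left, CharTwo.add_self_eq_zero] using hω 0 0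

theorem map_smul (hω : IsSpQuadratic ω) (c : ZMod 2) (x : V g) : ω (c • x) = c * ω x := by
  obtain rfl | rfl : c = 0 ∨ c = 1 := by revert c; decide
  · rw [zero_smul, zero_mul, hω.map_zero]
  · rw [one_smul, one_mul]

theorem map_smul_add_smul (hω : IsSpQuadratic ω) {x y : V g} (hxy : B x y = 1) (s t : ZMod 2) :
    ω (s • x + t • y) = s * ω x + t * ω y + s * t := by
  rw [hω, hω.map_smul, hω.map_smul, B.smul_left, B.smul_right, hxy, mul_one]

theorem map_sum_of_pairwise {ι : Type*} (hω : IsSpQuadratic ω) (s : Finset ι) (u : ι → V g)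
    (horth : (s : Set ι).Pairwise fun i j => B (u i) (u j) = 0) :
    ω (∑ i ∈ s, u i) = ∑ i ∈ s, ω (u i) := by
  induction s using Finset.cons_induction with
  | empty => simp [hω.map_zero]
  | cons j s hj ih =>
    rw [Finset.coe_cons, Set.pairwise_insert] at horth
    have hj_orth : ∑ i ∈ s, B (u j) (u i) = 0 :=
      Finset.sum_eq_zero fun i hi => (horth.2 i hi fun hij => hj (hij ▸ hi)).1
    rw [Finset.sum_cons, hω, B.sum_right, hj_orth, ih horth.1, add_zero, Finset.sum_cons]

end IsSpQuadratic

namespace IsSymplecticBasis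

variable {g : ℕ} {a b : Fin g → V g}

theorem B_smul_add_smul_eq_zero (h : IsSymplecticBasis a b) {i j : Fin g} (hij : i ≠ j)
    (s t s' t' : ZMod 2) : B (s • a i + t • b i) (s' • a j + t' • b j) = 0 := by
  obtain ⟨haa, hbb, hab, -⟩ := h
  have hba : B (b i) (a j) = 0 := by rw [B.comm, hab, if_neg hij.symm]
  simp [B.add_left, B.add_right, B.smul_left, B.smul_right, haa, hbb, hab, hba, hij]

noncomputable def coords (h : IsSymplecticBasis a b) : (Fin g → ZMod 2 × ZMod 2) ≃ V g :=
  (Equiv.arrowProdEquivProdArrow _ _ _).trans <|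
    (Equiv.sumArrowEquivProdArrow _ _ _).symm.trans
      (Module.Basis.mk h.2.2.2.1 h.2.2.2.2.ge).equivFun.symm.toEquiv

theorem coords_apply (h : IsSymplecticBasis a b) (p : Fin g → ZMod 2 × ZMod 2) :
    h.coords p = ∑ i, ((p i).1 • a i + (p i).2 • b i) := by
  simp [coords, Module.Basis.equivFun_symm_apply, Fintype.sum_sum_type, Finset.sum_add_distrib,
    Equiv.sumArrowEquivProdArrow]

theorem map_coords (h : IsSymplecticBasis a b) {ω : V g → ZMod 2} (hω : IsSpQuadratic ω)
    (p : Fin g → ZMod 2 × ZMod 2) :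
    ω (h.coords p) = ∑ i, ((p i).1 * ω (a i) + (p i).2 * ω (b i) + (p i).1 * (p i).2) := by
  rw [coords_apply, hω.map_sum_of_pairwise _ _ fun i _ j _ hij => h.B_smul_add_smul_eq_zero hij ..]
  refine Finset.sum_congr rfl fun i _ => hω.map_smul_add_smul ?_ _ _
  simp [h.2.2.1]

theorem sum_parityChar_eq (h : IsSymplecticBasis a b) {ω : V g → ZMod 2}
    (hω : IsSpQuadratic ω) :
    ∑ v, parityChar (ω v) = 2 ^ g * parityChar (∑ i, ω (a i) * ω (b i)) := by
  calc ∑ v, parityChar (ω v)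
      = ∑ p : Fin g → ZMod 2 × ZMod 2, ∏ i, parityChar
          ((p i).1 * ω (a i) + (p i).2 * ω (b i) + (p i).1 * (p i).2) := by
        rw [← h.coords.sum_comp]
        simp only [h.map_coords hω, AddChar.map_sum_eq_prod]
    _ = ∏ i, ∑ q : ZMod 2 × ZMod 2, parityChar (q.1 * ω (a i) + q.2 * ω (b i) + q.1 * q.2) := by
        rw [Fintype.prod_sum]
    _ = 2 ^ g * parityChar (∑ i, ω (a i) * ω (b i)) := by
        simp only [sum_parityChar_mul_add, Finset.prod_mul_distrib, Finset.prod_const,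
          Finset.card_univ, Fintype.card_fin, AddChar.map_sum_eq_prod]

end IsSymplecticBasis

/-- The Arf invariant `Σ ω(aᵢ)ω(bᵢ)` of an Sp-quadratic function does not depend on
the choice of symplectic basis. -/
theorem stmt9 (g : ℕ) (ω : V g → ZMod 2) (hω : IsSpQuadratic ω)
    (a b a' b' : Fin g → V g)
    (h : IsSymplecticBasis a b) (h' : IsSymplecticBasis a' b') :
    ∑ i, ω (a i) * ω (b i) = ∑ i, ω (a' i) * ω (b' i) := by
  refine parityChar_injective (mul_left_cancel₀ (pow_ne_zero g two_ne_zero) ?_)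
  rw [← h.sum_parityChar_eq hω, ← h'.sum_parityChar_eq hω]
end
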